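/- Let R be a unique factorization domain with field of fractions F of characteristic different from 2, let π ∈ R be a prime element, and let ξ be a unit of R whose image in the field of fractions of R/(π) is not a square. Then the quaternion F-algebra ℍ[F; ξ, π] (the four-dimensional F-algebra with basis 1, i, j, k and relations i² = ξ, j² = π, ij = −ji = k) is a division ring: every nonzero element is invertible. -/

import Mathlib

/-!
The reduced norm of `x = a + b i + c j + d k` in `ℍ[F, ξ, π]` is `a² - ξ b² - π c² + ξ π d²`,
and `x` is invertible as soon as its norm is nonzero. Clearing denominators, it suffices that
the norm form has no nontrivial zero over `R`. Reducing a zero modulo `π`, the non-squareness of `ξ`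
forces `π ∣ a, b`, then after dividing by `π` also `π ∣ c, d`, and the quotient by `π` is again a
zero. So every power of `π` divides each coordinate, which in a UFD forces them to vanish.
-/

open Quaternion

theorem eq_zero_of_sq_eq_mul_sq {K : Type*} [Field K] {ξ a b : K} (hξ : ¬IsSquare ξ)
    (h : a ^ 2 = ξ * b ^ 2) : b = 0 := by
  by_contra hb
  exact hξ ⟨a / b, by field_simp; linear_combination -h⟩

namespace QuaternionAlgebra

def normForm {R : Type*} [CommRing R] (c₁ c₂ a b c d : R) : R :=
  a ^ 2 - c₁ * b ^ 2 - c₂ * c ^ 2 + c₁ * c₂ * d ^ 2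

theorem re_mul_star {R : Type*} [CommRing R] {c₁ c₂ : R} (x : ℍ[R, c₁, c₂]) :
    (x * star x).re = normForm c₁ c₂ x.re x.imI x.imJ x.imK := by
  simp only [normForm, re_mul, re_star, imI_star, imJ_star, imK_star]
  ring

theorem isUnit_of_re_mul_star_ne_zero {K : Type*} [Field K] {c₁ c₂ c₃ : K}
    {x : ℍ[K, c₁, c₂, c₃]} (h : (x * star x).re ≠ 0) : IsUnit x := by
  have hunit : IsUnit (x * star x) := by
    rw [mul_star_eq_coe, ← coe_algebraMap]
    exact h.isUnit.map _
  have hcomm : Commute x (star x) := (star_comm_self' x).symm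
  exact (hcomm.isUnit_mul_iff.mp hunit).1

theorem eq_zero_of_re_mul_star_eq_zero {R F : Type*} [CommRing R] [Field F] [Algebra R F]
    [IsFractionRing R F] {c₁ c₂ : R}
    (hR : ∀ a b c d : R, normForm c₁ c₂ a b c d = 0 → a = 0 ∧ b = 0 ∧ c = 0 ∧ d = 0)
    {x : ℍ[F, algebraMap R F c₁, algebraMap R F c₂]} (hx : (x * star x).re = 0) : x = 0 := by
  obtain ⟨t, ht⟩ := IsLocalization.exist_integer_multiples_of_finite (nonZeroDivisors R)
    ![x.re, x.imI, x.imJ, x.imK]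
  obtain ⟨a, ha⟩ := ht 0
  obtain ⟨b, hb⟩ := ht 1
  obtain ⟨c, hc⟩ := ht 2
  obtain ⟨d, hd⟩ := ht 3
  simp only [Algebra.smul_def, Matrix.cons_val] at ha hb hc hd
  have ht0 : algebraMap R F t ≠ 0 := (IsLocalization.map_units F t).ne_zero
  have hform : normForm c₁ c₂ a b c d = 0 := by
    apply IsFractionRing.injective R F
    rw [re_mul_star, normForm] at hx
    simp only [normForm, map_add, map_sub, map_mul, map_pow, map_zero, ha, hb, hc, hd]
    linear_combination algebraMap R F t ^ 2 * hx
  obtain ⟨rfl, rfl, rfl, rfl⟩ := hR a b c d hform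
  simp only [map_zero, eq_comm (a := (0 : F)), mul_eq_zero, ht0, false_or] at ha hb hc hd
  ext <;> assumption

section Descent

variable {R K : Type*} [CommRing R] [Field K] (φ : R →+* K) {π ξ : R}

theorem dvd_and_dvd_of_dvd_sq_sub_mul_sq (hker : ∀ r, φ r = 0 ↔ π ∣ r) (hξ : ¬IsSquare (φ ξ))
    {a b : R} (h : π ∣ a ^ 2 - ξ * b ^ 2) : π ∣ a ∧ π ∣ b := by
  have hφ : φ a ^ 2 = φ ξ * φ b ^ 2 := by
    rw [← sub_eq_zero, ← map_pow, ← map_pow, ← map_mul, ← map_sub]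
    exact (hker _).2 h
  have hb : φ b = 0 := eq_zero_of_sq_eq_mul_sq hξ hφ
  rw [hb, zero_pow two_ne_zero, mul_zero, pow_eq_zero_iff two_ne_zero] at hφ
  exact ⟨(hker a).1 hφ, (hker b).1 hb⟩

variable [IsDomain R]

theorem exists_eq_mul_of_normForm_eq_zero (hker : ∀ r, φ r = 0 ↔ π ∣ r)
    (hξ : ¬IsSquare (φ ξ)) (hπ : π ≠ 0) {a b c d : R} (h : normForm ξ π a b c d = 0) :
    ∃ a' b' c' d', a = π * a' ∧ b = π * b' ∧ c = π * c' ∧ d = π * d' ∧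
      normForm ξ π a' b' c' d' = 0 := by
  unfold normForm at h ⊢
  obtain ⟨⟨a', rfl⟩, ⟨b', rfl⟩⟩ :=
    dvd_and_dvd_of_dvd_sq_sub_mul_sq φ hker hξ (a := a) (b := b)
      ⟨c ^ 2 - ξ * d ^ 2, by linear_combination h⟩
  -- after dividing by `π`, the equation reads `c² - ξ d² = π (a'² - ξ b'²)`
  have hcd : π ∣ c ^ 2 - ξ * d ^ 2 :=
    ⟨a' ^ 2 - ξ * b' ^ 2, mul_left_cancel₀ hπ (by linear_combination -h)⟩
  obtain ⟨⟨c', rfl⟩, ⟨d', rfl⟩⟩ := dvd_and_dvd_of_dvd_sq_sub_mul_sq φ hker hξ hcd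
  refine ⟨a', b', c', d', rfl, rfl, rfl, rfl, mul_left_cancel₀ (pow_ne_zero 2 hπ) ?_⟩
  linear_combination h

theorem pow_dvd_of_normForm_eq_zero (hker : ∀ r, φ r = 0 ↔ π ∣ r) (hξ : ¬IsSquare (φ ξ))
    (hπ : π ≠ 0) (n : ℕ) {a b c d : R} (h : normForm ξ π a b c d = 0) :
    π ^ n ∣ a ∧ π ^ n ∣ b ∧ π ^ n ∣ c ∧ π ^ n ∣ d := by
  induction n generalizing a b c d with
  | zero => simp
  | succ n ih =>
    obtain ⟨a', b', c', d', rfl, rfl, rfl, rfl, h'⟩ :=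
      exists_eq_mul_of_normForm_eq_zero φ hker hξ hπ h
    obtain ⟨ha, hb, hc, hd⟩ := ih h'
    simp only [pow_succ']
    exact ⟨mul_dvd_mul_left π ha, mul_dvd_mul_left π hb, mul_dvd_mul_left π hc,
      mul_dvd_mul_left π hd⟩

theorem eq_zero_of_normForm_eq_zero [WfDvdMonoid R] (hker : ∀ r, φ r = 0 ↔ π ∣ r)
    (hξ : ¬IsSquare (φ ξ)) (hπ : π ≠ 0) {a b c d : R} (h : normForm ξ π a b c d = 0) :
    a = 0 ∧ b = 0 ∧ c = 0 ∧ d = 0 := by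
  have hπu : ¬IsUnit π := fun hu => (hu.map φ).ne_zero ((hker π).2 dvd_rfl)
  have eq_zero (r : R) (hr : ∀ n : ℕ, π ^ n ∣ r) : r = 0 := by
    by_contra hr0
    exact FiniteMultiplicity.not_iff_forall.2 hr (.of_not_isUnit hπu hr0)
  have hpow (n : ℕ) := pow_dvd_of_normForm_eq_zero φ hker hξ hπ n h
  exact ⟨eq_zero a fun n => (hpow n).1, eq_zero b fun n => (hpow n).2.1,
    eq_zero c fun n => (hpow n).2.2.1, eq_zero d fun n => (hpow n).2.2.2⟩

end Descent

end QuaternionAlgebra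

theorem quaternionAlgebra_isDivisionRing_general
    (R : Type*) [CommRing R] [IsDomain R] [UniqueFactorizationMonoid R]
    (F : Type*) [Field F] [Algebra R F] [IsFractionRing R F]
    (π : R) (hπ : Prime π) (ξ : R)
    (hns : ¬ IsSquare (algebraMap (R ⧸ Ideal.span {π}) (FractionRing (R ⧸ Ideal.span {π}))
      (Ideal.Quotient.mk (Ideal.span {π}) ξ))) :
    ∀ x : ℍ[F, algebraMap R F ξ, algebraMap R F π], x ≠ 0 → IsUnit x := by
  intro x hx
  have := (Ideal.span_singleton_prime hπ.ne_zero).2 hπ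
  let φ := (algebraMap (R ⧸ Ideal.span {π}) (FractionRing (R ⧸ Ideal.span {π}))).comp
    (Ideal.Quotient.mk (Ideal.span {π}))
  have hker (r : R) : φ r = 0 ↔ π ∣ r := by
    rw [RingHom.comp_apply, IsFractionRing.to_map_eq_zero_iff, Ideal.Quotient.eq_zero_iff_mem,
      Ideal.mem_span_singleton]
  refine QuaternionAlgebra.isUnit_of_re_mul_star_ne_zero fun h => hx ?_
  refine QuaternionAlgebra.eq_zero_of_re_mul_star_eq_zero (fun a b c d => ?_) h
  exact QuaternionAlgebra.eq_zero_of_normForm_eq_zero φ hker hns hπ.ne_zero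

/-- Let `R` be a unique factorization domain with field of fractions `F` of characteristic
different from `2`, let `π ∈ R` be a prime element, and let `ξ` be a unit of `R` whose image
in the field of fractions of `R/(π)` is not a square.  Then the quaternion `F`-algebra
`ℍ[F; ξ, π]` is a division ring: every nonzero element is invertible. -/
theorem quaternionAlgebra_isDivisionRing
    (R : Type*) [CommRing R] [IsDomain R] [UniqueFactorizationMonoid R]
    (F : Type*) [Field F] [Algebra R F] [IsFractionRing R F]
    (h2 : (2 : F) ≠ 0)
    (π : R) (hπ : Prime π) (ξ : R) (hξ : IsUnit ξ)
    (hns : ¬ IsSquare (algebraMap (R ⧸ Ideal.span {π}) (FractionRing (R ⧸ Ideal.span {π}))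
      (Ideal.Quotient.mk (Ideal.span {π}) ξ))) :
    ∀ x : ℍ[F, algebraMap R F ξ, algebraMap R F π], x ≠ 0 → IsUnit x :=
  quaternionAlgebra_isDivisionRing_general R F π hπ ξ hns
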